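/- arXiv:2104.06694 — 4 statements merged into one kernel-verified Lean document; each statement's English description precedes it below -/
import Mathlib

section
/- Let G be a finite nilpotent group. Then the power graph P(G) is a line graph (i.e., there exists a graph Γ such that P(G) is isomorphic to the line graph of Γ) if and only if G is a cyclic group of prime power order. -/
/-- The power graph of a group `G`: distinct `x, y` are adjacent iff one is a positive
integer power of the other. -/
def powerGraph (G : Type) [Group G] : SimpleGraph G where
  Adj x y := x ≠ y ∧ ((∃ n : ℕ, 0 < n ∧ y ^ n = x) ∨ (∃ n : ℕ, 0 < n ∧ x ^ n = y))
  symm := by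
    constructor
    rintro x y ⟨hxy, h⟩
    exact ⟨hxy.symm, h.symm⟩
  loopless := by
    constructor
    rintro x ⟨h, -⟩
    exact h rfl

/-- A vertex is dominating if it is adjacent to every other vertex. -/
def SimpleGraph.IsDominatingVertex {V : Type} (H : SimpleGraph V) (v : V) : Prop :=
  ∀ u, u ≠ v → H.Adj v u

/-- The proper power graph: the induced subgraph of the power graph on the
set of non-dominating vertices. -/
def properPowerGraph (G : Type) [Group G] :=
  (powerGraph G).induce {x : G | ¬ (powerGraph G).IsDominatingVertex x}

/-- A graph is a line graph if it is isomorphic to the line graph of some graph. -/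
def IsLineGraph {V : Type} (H : SimpleGraph V) : Prop :=
  ∃ (W : Type) (Γ : SimpleGraph W), Nonempty (H ≃g Γ.lineGraph)

/-!
A line graph contains no induced claw `K₁,₃`, as an edge has only two ends, and no induced `K₅`
minus an edge, as four pairwise meeting edges share a vertex. In the power graph the identity is adjacent to
every vertex, so claw-freeness says that among any three elements one is a power of another; if
`⟨a⟩` is a largest cyclic subgroup and `b ∉ ⟨a⟩`, the triple `a, b, ab` violates this, so
`G = ⟨a⟩`. If the order `n` of a generator `g` had distinct prime divisors `p` and `q`, then
`g, g⁻¹, 1, g ^ (n / p), g ^ (n / q)` would span `K₅` minus an edge. Conversely, in a cyclic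
`p`-group any two elements are powers one of the other, so the power graph is complete, which is
the line graph of a star.
-/

namespace Sym2

variable {V : Type*}

def Meets (x y : Sym2 V) : Prop := ∃ v, v ∈ x ∧ v ∈ y

theorem meets_or_meets_or_meets {x a b c : Sym2 V} (ha : x.Meets a) (hb : x.Meets b)
    (hc : x.Meets c) : a.Meets b ∨ a.Meets c ∨ b.Meets c := by
  induction x using Sym2.ind
  induction a using Sym2.ind
  induction b using Sym2.ind
  induction c using Sym2.ind
  simp only [Meets, Sym2.mem_iff, or_and_right, exists_or, exists_eq_left] at *
  grind

theorem exists_mem_of_pairwise_meets {x y z w : Sym2 V}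
    (hxy : x ≠ y) (hxz : x ≠ z) (hyz : y ≠ z) (hwx : w ≠ x) (hwy : w ≠ y) (hwz : w ≠ z)
    (mxy : x.Meets y) (mxz : x.Meets z) (myz : y.Meets z)
    (mwx : w.Meets x) (mwy : w.Meets y) (mwz : w.Meets z) :
    ∃ v, v ∈ x ∧ v ∈ y ∧ v ∈ z ∧ v ∈ w := by
  induction x using Sym2.ind
  induction y using Sym2.ind
  induction z using Sym2.ind
  induction w using Sym2.ind
  simp only [Meets, Sym2.mem_iff, ne_eq, Sym2.eq_iff, or_and_right, exists_or,
    exists_eq_left] at *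
  grind

end Sym2

namespace SimpleGraph

variable {W : Type*} {Γ : SimpleGraph W}

theorem lineGraph_adj_iff_meets {e f : Γ.edgeSet} :
    Γ.lineGraph.Adj e f ↔ (e : Sym2 W) ≠ f ∧ (e : Sym2 W).Meets f := by
  rw [lineGraph_adj_iff_exists, Subtype.coe_ne_coe]
  rfl

theorem lineGraph_adj_or_adj_or_adj {x a b c : Γ.edgeSet} (ha : Γ.lineGraph.Adj x a)
    (hb : Γ.lineGraph.Adj x b) (hc : Γ.lineGraph.Adj x c) (hab : a ≠ b) (hac : a ≠ c)
    (hbc : b ≠ c) : Γ.lineGraph.Adj a b ∨ Γ.lineGraph.Adj a c ∨ Γ.lineGraph.Adj b c := by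
  simp only [lineGraph_adj_iff_meets, ne_eq, Subtype.coe_inj, hab, hac, hbc, not_false_eq_true,
    true_and] at *
  exact Sym2.meets_or_meets_or_meets ha.2 hb.2 hc.2

theorem lineGraph_exists_mem_of_pairwise_adj {x y z w : Γ.edgeSet}
    (hxy : Γ.lineGraph.Adj x y) (hxz : Γ.lineGraph.Adj x z) (hyz : Γ.lineGraph.Adj y z)
    (hwx : Γ.lineGraph.Adj w x) (hwy : Γ.lineGraph.Adj w y) (hwz : Γ.lineGraph.Adj w z) :
    ∃ v, v ∈ (x : Sym2 W) ∧ v ∈ (y : Sym2 W) ∧ v ∈ (z : Sym2 W) ∧ v ∈ (w : Sym2 W) := by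
  simp only [lineGraph_adj_iff_meets] at *
  exact Sym2.exists_mem_of_pairwise_meets hxy.1 hxz.1 hyz.1 hwx.1 hwy.1 hwz.1
    hxy.2 hxz.2 hyz.2 hwx.2 hwy.2 hwz.2

theorem lineGraph_adj_of_adj_triangle {x y z w w' : Γ.edgeSet} (hxy : Γ.lineGraph.Adj x y)
    (hxz : Γ.lineGraph.Adj x z) (hyz : Γ.lineGraph.Adj y z) (hwx : Γ.lineGraph.Adj w x)
    (hwy : Γ.lineGraph.Adj w y) (hwz : Γ.lineGraph.Adj w z) (hw'x : Γ.lineGraph.Adj w' x)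
    (hw'y : Γ.lineGraph.Adj w' y) (hw'z : Γ.lineGraph.Adj w' z) (hne : w ≠ w') :
    Γ.lineGraph.Adj w w' := by
  obtain ⟨v, hvx, hvy, -, hvw⟩ :=
    lineGraph_exists_mem_of_pairwise_adj hxy hxz hyz hwx hwy hwz
  obtain ⟨v', hv'x, hv'y, -, hv'w'⟩ :=
    lineGraph_exists_mem_of_pairwise_adj hxy hxz hyz hw'x hw'y hw'z
  obtain rfl | hvv' := eq_or_ne v v'
  · exact lineGraph_adj_iff_exists.mpr ⟨hne, v, hvw, hv'w'⟩
  · exact absurd (Sym2.eq_of_ne_mem hvv' hvx hv'x hvy hv'y) (lineGraph_adj_iff_meets.mp hxy).1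

end SimpleGraph

theorem isLineGraph_top (α : Type) : IsLineGraph (⊤ : SimpleGraph α) := by
  let f (a : α) : (completeBipartiteGraph Unit α).edgeSet := ⟨s(.inl (), .inr a), by simp⟩
  have hf : Function.Bijective f := by
    refine ⟨fun a b h => by simpa [f] using h, fun ⟨e, he⟩ => ?_⟩
    rw [SimpleGraph.edgeSet_completeBipartiteGraph] at he
    obtain ⟨⟨⟨⟩, a⟩, rfl⟩ := he
    exact ⟨a, rfl⟩
  refine ⟨_, _, ⟨Equiv.ofBijective f hf, fun {a b} => ?_⟩⟩
  simp [SimpleGraph.lineGraph_adj_iff_exists, hf.injective.eq_iff, f]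

theorem IsLineGraph.adj_or_adj_or_adj {V : Type} {H : SimpleGraph V} (hH : IsLineGraph H)
    {x a b c : V} (ha : H.Adj x a) (hb : H.Adj x b) (hc : H.Adj x c) (hab : a ≠ b) (hac : a ≠ c)
    (hbc : b ≠ c) : H.Adj a b ∨ H.Adj a c ∨ H.Adj b c := by
  obtain ⟨W, Γ, ⟨φ⟩⟩ := hH
  simp only [← φ.map_adj_iff] at *
  exact SimpleGraph.lineGraph_adj_or_adj_or_adj ha hb hc (φ.injective.ne hab)
    (φ.injective.ne hac) (φ.injective.ne hbc)

theorem IsLineGraph.adj_of_adj_triangle {V : Type} {H : SimpleGraph V} (hH : IsLineGraph H)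
    {x y z w w' : V} (hxy : H.Adj x y) (hxz : H.Adj x z) (hyz : H.Adj y z) (hwx : H.Adj w x)
    (hwy : H.Adj w y) (hwz : H.Adj w z) (hw'x : H.Adj w' x) (hw'y : H.Adj w' y)
    (hw'z : H.Adj w' z) (hne : w ≠ w') : H.Adj w w' := by
  obtain ⟨W, Γ, ⟨φ⟩⟩ := hH
  simp only [← φ.map_adj_iff] at *
  exact SimpleGraph.lineGraph_adj_of_adj_triangle hxy hxz hyz hwx hwy hwz hw'x hw'y hw'z
    (φ.injective.ne hne)

open Subgroup

theorem exists_pos_pow_eq_iff_mem_zpowers {G : Type*} [Group G] {x y : G}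
    (hy : IsOfFinOrder y) : (∃ n : ℕ, 0 < n ∧ y ^ n = x) ↔ x ∈ zpowers y := by
  rw [← hy.mem_powers_iff_mem_zpowers]
  refine ⟨fun ⟨n, _, h⟩ => ⟨n, h⟩, fun ⟨n, h⟩ => ⟨n + orderOf y, ?_, ?_⟩⟩
  · have := hy.orderOf_pos
    omega
  rw [pow_add, pow_orderOf_eq_one, mul_one]
  exact h

section PowerGraph

variable {G : Type} [Group G] [Finite G]

theorem powerGraph_adj_iff {x y : G} :
    (powerGraph G).Adj x y ↔ x ≠ y ∧ (x ∈ zpowers y ∨ y ∈ zpowers x) := by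
  change x ≠ y ∧ (_ ∨ _) ↔ _
  rw [exists_pos_pow_eq_iff_mem_zpowers (isOfFinOrder_of_finite y),
    exists_pos_pow_eq_iff_mem_zpowers (isOfFinOrder_of_finite x)]

theorem powerGraph_one_adj {x : G} (hx : x ≠ 1) : (powerGraph G).Adj 1 x :=
  powerGraph_adj_iff.mpr ⟨hx.symm, .inl (one_mem _)⟩

theorem powerGraph_eq_top (h : ∀ x y : G, x ∈ zpowers y ∨ y ∈ zpowers x) :
    powerGraph G = ⊤ := by
  ext x y
  simp [powerGraph_adj_iff, h]

end PowerGraph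

theorem isCyclic_of_forall_three_mem_zpowers {G : Type*} [Group G] [Finite G]
    (h : ∀ a b c : G, (a ∈ zpowers b ∨ b ∈ zpowers a) ∨
      (a ∈ zpowers c ∨ c ∈ zpowers a) ∨ (b ∈ zpowers c ∨ c ∈ zpowers b)) :
    IsCyclic G := by
  obtain ⟨a, ha⟩ := Finite.exists_max (fun x : G => Nat.card (zpowers x))
  have hmax {x : G} (hx : a ∈ zpowers x) : x ∈ zpowers a := by
    rw [eq_of_le_of_card_ge (zpowers_le.mpr hx) (ha x)]
    exact mem_zpowers x
  refine isCyclic_iff_exists_zpowers_eq_top.mpr ⟨a, eq_top_iff.mpr fun b _ => ?_⟩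
  by_contra hb
  have hc : a * b ∉ zpowers a := fun h => hb (by simpa using mul_mem (inv_mem (mem_zpowers a)) h)
  have hab : a ∉ zpowers b := fun h => hb (hmax h)
  have hac : a ∉ zpowers (a * b) := fun h => hc (hmax h)
  have hbc {x : G} (hcx : a * b ∈ zpowers x) (hbx : b ∈ zpowers x) : a ∈ zpowers x := by
    simpa using mul_mem hcx (inv_mem hbx)
  rcases h a b (a * b) with (h | h) | (h | h) | (h | h)
  exacts [hab h, hb h, hac h, hc h, hac (hbc (mem_zpowers _) h), hab (hbc h (mem_zpowers b))]

theorem IsCyclic.mem_zpowers_of_orderOf_dvd {G : Type*} [Group G] [Finite G] [IsCyclic G]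
    {x y : G} (h : orderOf x ∣ orderOf y) : x ∈ zpowers y := by
  classical
  have := Fintype.ofFinite G
  let S : Finset G := {g | g ^ orderOf y = 1}
  have hsub : (zpowers y : Set G).toFinset ⊆ S := fun g hg => by
    simpa [S, orderOf_dvd_iff_pow_eq_one] using
      orderOf_dvd_of_mem_zpowers (Set.mem_toFinset.mp hg)
  have hS : (zpowers y : Set G).toFinset = S := by
    refine Finset.eq_of_subset_of_card_le hsub ?_
    rw [Set.toFinset_card, ← Nat.card_eq_fintype_card]
    exact (IsCyclic.card_pow_eq_one_le (orderOf_pos y)).trans_eq (Nat.card_zpowers y).symm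
  have hx : x ∈ S := by simpa [S] using orderOf_dvd_iff_pow_eq_one.mp h
  rwa [← hS, Set.mem_toFinset] at hx

theorem IsCyclic.mem_zpowers_or_mem_zpowers {G : Type*} [Group G] [Finite G] [IsCyclic G]
    {p n : ℕ} (hp : p.Prime) (hcard : Nat.card G = p ^ n) (x y : G) :
    x ∈ zpowers y ∨ y ∈ zpowers x := by
  obtain ⟨i, -, hi⟩ := (Nat.dvd_prime_pow hp).mp (hcard ▸ orderOf_dvd_natCard x)
  obtain ⟨j, -, hj⟩ := (Nat.dvd_prime_pow hp).mp (hcard ▸ orderOf_dvd_natCard y)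
  rcases le_total i j with h | h
  · exact .inl (mem_zpowers_of_orderOf_dvd (hi ▸ hj ▸ pow_dvd_pow p h))
  · exact .inr (mem_zpowers_of_orderOf_dvd (hi ▸ hj ▸ pow_dvd_pow p h))

theorem isCyclic_of_isLineGraph_powerGraph {G : Type} [Group G] [Finite G]
    (hG : IsLineGraph (powerGraph G)) : IsCyclic G := by
  refine isCyclic_of_forall_three_mem_zpowers fun a b c => ?_
  by_contra! h
  obtain ⟨⟨hab, hba⟩, ⟨hac, hca⟩, ⟨hbc, hcb⟩⟩ := h
  have ne_one {x y : G} (h : x ∉ zpowers y) : x ≠ 1 := fun h1 => h (h1 ▸ one_mem _)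
  have ne {x y : G} (h : x ∉ zpowers y) : x ≠ y := fun h1 => h (h1 ▸ mem_zpowers x)
  have := hG.adj_or_adj_or_adj (powerGraph_one_adj (ne_one hab)) (powerGraph_one_adj (ne_one hba))
    (powerGraph_one_adj (ne_one hca)) (ne hab) (ne hac) (ne hbc)
  simp only [powerGraph_adj_iff] at this
  tauto

theorem not_isLineGraph_powerGraph_of_dvd_orderOf {G : Type} [Group G] [Finite G] {g : G}
    {p q : ℕ} (hp : p.Prime) (hq : q.Prime) (hpq : p ≠ q) (hpg : p ∣ orderOf g)
    (hqg : q ∣ orderOf g) : ¬ IsLineGraph (powerGraph G) := by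
  intro hG
  set n := orderOf g
  set a := g ^ (n / p)
  set b := g ^ (n / q)
  have ha : orderOf a = p := orderOf_pow_orderOf_div (orderOf_pos g).ne' hpg
  have hb : orderOf b = q := orderOf_pow_orderOf_div (orderOf_pos g).ne' hqg
  have hn : p * q ≤ n := Nat.le_of_dvd (orderOf_pos g)
    (((Nat.coprime_primes hp hq).mpr hpq).mul_dvd_of_dvd_of_dvd hpg hqg)
  have := hp.two_le
  have := hq.two_le
  have hpn : p < n := by nlinarith
  have hqn : q < n := by nlinarith
  have adj {x y : G} (hxy : orderOf x ≠ orderOf y) (h : x ∈ zpowers y) :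
      (powerGraph G).Adj x y :=
    powerGraph_adj_iff.mpr ⟨mt (congrArg orderOf) hxy, .inl h⟩
  have mem_inv {x : G} (h : x ∈ zpowers g) : x ∈ zpowers g⁻¹ := by rwa [zpowers_inv]
  have ha_mem : a ∈ zpowers g := pow_mem (mem_zpowers g) _
  have hb_mem : b ∈ zpowers g := pow_mem (mem_zpowers g) _
  have h1 : orderOf (1 : G) = 1 := orderOf_one
  have hinv : orderOf g⁻¹ = n := orderOf_inv g
  have hg : g ≠ g⁻¹ := fun h => by
    have : n ∣ 2 := orderOf_dvd_of_pow_eq_one (by rw [sq]; exact eq_inv_iff_mul_eq_one.mp h)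
    have := Nat.le_of_dvd two_pos this
    omega
  have hadj := hG.adj_of_adj_triangle
    (powerGraph_adj_iff.mpr ⟨hg, .inr (inv_mem (mem_zpowers g))⟩)
    (adj (by omega) (one_mem _)).symm (adj (by omega) (one_mem _)).symm
    (adj (by omega) ha_mem) (adj (by omega) (mem_inv ha_mem)) (adj (by omega) (one_mem _)).symm
    (adj (by omega) hb_mem) (adj (by omega) (mem_inv hb_mem)) (adj (by omega) (one_mem _)).symm
    (mt (congrArg orderOf) (by omega))
  rcases (powerGraph_adj_iff.mp hadj).2 with h | h
  · exact (Nat.prime_dvd_prime_iff_eq hp hq).not.mpr hpq (ha ▸ hb ▸ orderOf_dvd_of_mem_zpowers h)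
  · exact (Nat.prime_dvd_prime_iff_eq hq hp).not.mpr hpq.symm
      (hb ▸ ha ▸ orderOf_dvd_of_mem_zpowers h)

theorem Nat.exists_prime_pow_eq_of_forall_prime_dvd_eq {m : ℕ} (hm : m ≠ 0)
    (h : ∀ p q, p.Prime → q.Prime → p ∣ m → q ∣ m → p = q) :
    ∃ p k, p.Prime ∧ m = p ^ k := by
  obtain rfl | hm1 := eq_or_ne m 1
  · exact ⟨2, 0, prime_two, rfl⟩
  exact ⟨m.minFac, _, minFac_prime hm1, eq_prime_pow_of_unique_prime_dvd hm
    fun hd hdm => h _ _ hd (minFac_prime hm1) hdm (minFac_dvd m)⟩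

theorem powerGraph_isLineGraph_iff_of_nilpotent_general (G : Type) [Group G] [Finite G] :
    IsLineGraph (powerGraph G) ↔
      IsCyclic G ∧ ∃ (p n : ℕ), p.Prime ∧ Nat.card G = p ^ n := by
  constructor
  · intro hG
    have := isCyclic_of_isLineGraph_powerGraph hG
    obtain ⟨g, hg⟩ := IsCyclic.exists_ofOrder_eq_natCard (α := G)
    refine ⟨this, Nat.exists_prime_pow_eq_of_forall_prime_dvd_eq Nat.card_pos.ne'
      fun p q hp hq hpG hqG => ?_⟩
    by_contra hpq
    exact not_isLineGraph_powerGraph_of_dvd_orderOf hp hq hpq (hg ▸ hpG) (hg ▸ hqG) hG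
  · rintro ⟨_, p, n, hp, hcard⟩
    rw [powerGraph_eq_top (IsCyclic.mem_zpowers_or_mem_zpowers hp hcard)]
    exact isLineGraph_top G

theorem powerGraph_isLineGraph_iff_of_nilpotent (G : Type) [Group G] [Finite G]
    (hnil : Group.IsNilpotent G) :
    IsLineGraph (powerGraph G) ↔
      IsCyclic G ∧ ∃ (p n : ℕ), p.Prime ∧ Nat.card G = p ^ n :=
  powerGraph_isLineGraph_iff_of_nilpotent_general G
end

section
/- Let G be a finite non-cyclic abelian group. Then the power graph P(G) is not a line graph: there is no graph Γ such that P(G) is isomorphic to the line graph of Γ. -/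
/-!
A line graph has no induced claw `K_{1,3}`: three edges sharing an endpoint with a fourth edge
`s(u, v)` each contain `u` or `v`, so two of them share that endpoint.

In a finite non-cyclic abelian group pick `g` of maximal order, i.e. of order the exponent, and
`h ∉ ⟨g⟩`. A cyclic subgroup containing `g` is then `⟨g⟩` itself, and from this one checks that
none of `g`, `h`, `g * h` is a power of another. So `g`, `h`, `g * h` are pairwise non-adjacent
in the power graph, while all three are adjacent to `1`: a claw.
-/

namespace SimpleGraph

variable {V V' : Type}

/-- `c` together with `x`, `y`, `z` spans an induced claw `K_{1,3}` with centre `c`. -/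
def IsClaw (H : SimpleGraph V) (c x y z : V) : Prop :=
  H.Adj c x ∧ H.Adj c y ∧ H.Adj c z ∧ x ≠ y ∧ x ≠ z ∧ y ≠ z ∧
    ¬ H.Adj x y ∧ ¬ H.Adj x z ∧ ¬ H.Adj y z

theorem IsClaw.map_iso {H : SimpleGraph V} {H' : SimpleGraph V'} (φ : H ≃g H') {c x y z : V}
    (h : H.IsClaw c x y z) : H'.IsClaw (φ c) (φ x) (φ y) (φ z) := by
  simpa only [IsClaw, Iso.map_adj_iff, ne_eq, EmbeddingLike.apply_eq_iff_eq] using h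

theorem lineGraph_not_isClaw (Γ : SimpleGraph V) (c x y z : Γ.edgeSet) :
    ¬ Γ.lineGraph.IsClaw c x y z := by
  rintro ⟨hx, hy, hz, hxy, hxz, hyz, nxy, nxz, nyz⟩
  simp only [lineGraph_adj_iff_exists, not_and, not_exists] at hx hy hz nxy nxz nyz
  obtain ⟨-, a, hcx, hax⟩ := hx
  obtain ⟨-, b, hcy, hby⟩ := hy
  obtain ⟨-, d, hcz, hdz⟩ := hz
  obtain ⟨u, v, huv⟩ : ∃ u v, (c : Sym2 V) = s(u, v) :=
    Sym2.inductionOn (c : Sym2 V) fun u v => ⟨u, v, rfl⟩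
  rw [huv, Sym2.mem_iff] at hcx hcy hcz
  rcases hcx with rfl | rfl <;> rcases hcy with rfl | rfl <;> rcases hcz with rfl | rfl <;>
    first
      | exact nxy hxy _ hax hby
      | exact nxz hxz _ hax hdz
      | exact nyz hyz _ hby hdz

end SimpleGraph

theorem IsLineGraph.not_isClaw {V : Type} {H : SimpleGraph V} (hH : IsLineGraph H)
    (c x y z : V) : ¬ H.IsClaw c x y z := fun h => by
  obtain ⟨W, Γ, ⟨φ⟩⟩ := hH
  exact Γ.lineGraph_not_isClaw _ _ _ _ (h.map_iso φ)

open Subgroup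

section PowerGraph

variable {G : Type} [Group G]

theorem powerGraph_adj_one [Finite G] {x : G} (hx : x ≠ 1) : (powerGraph G).Adj 1 x :=
  ⟨hx.symm, Or.inl ⟨orderOf x, orderOf_pos x, pow_orderOf_eq_one x⟩⟩

theorem mem_zpowers_or_mem_zpowers_of_powerGraph_adj {x y : G} (h : (powerGraph G).Adj x y) :
    x ∈ zpowers y ∨ y ∈ zpowers x := by
  obtain ⟨-, ⟨n, -, hn⟩ | ⟨n, -, hn⟩⟩ := h
  · exact Or.inl ⟨n, by simpa using hn⟩
  · exact Or.inr ⟨n, by simpa using hn⟩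

theorem powerGraph_not_adj_of_notMem_zpowers {x y : G} (hxy : x ∉ zpowers y)
    (hyx : y ∉ zpowers x) : ¬ (powerGraph G).Adj x y := fun h =>
  (mem_zpowers_or_mem_zpowers_of_powerGraph_adj h).elim hxy hyx

theorem ne_one_of_notMem_zpowers {x y : G} (h : x ∉ zpowers y) : x ≠ 1 := by
  rintro rfl
  exact h (one_mem _)

theorem ne_of_notMem_zpowers {x y : G} (h : x ∉ zpowers y) : x ≠ y := by
  rintro rfl
  exact h (mem_zpowers x)

theorem powerGraph_isClaw_one_of_notMem_zpowers [Finite G] {x y z : G}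
    (hxy : x ∉ zpowers y) (hyx : y ∉ zpowers x) (hxz : x ∉ zpowers z) (hzx : z ∉ zpowers x)
    (hyz : y ∉ zpowers z) (hzy : z ∉ zpowers y) : (powerGraph G).IsClaw 1 x y z :=
  ⟨powerGraph_adj_one (ne_one_of_notMem_zpowers hxy),
    powerGraph_adj_one (ne_one_of_notMem_zpowers hyx),
    powerGraph_adj_one (ne_one_of_notMem_zpowers hzx),
    ne_of_notMem_zpowers hxy, ne_of_notMem_zpowers hxz, ne_of_notMem_zpowers hyz,
    powerGraph_not_adj_of_notMem_zpowers hxy hyx, powerGraph_not_adj_of_notMem_zpowers hxz hzx,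
    powerGraph_not_adj_of_notMem_zpowers hyz hzy⟩

theorem notMem_zpowers_of_orderOf_eq_exponent [Finite G] {g x : G}
    (hg : orderOf g = Monoid.exponent G) (hx : x ∉ zpowers g) : g ∉ zpowers x := by
  intro hgx
  have hcard : Nat.card (zpowers x) ≤ Nat.card (zpowers g) := by
    rw [Nat.card_zpowers, Nat.card_zpowers, hg]
    exact Monoid.orderOf_le_exponent Monoid.ExponentExists.of_finite x
  have heq : zpowers g = zpowers x := eq_of_le_of_card_ge (zpowers_le.2 hgx) hcard
  exact hx (heq ▸ mem_zpowers x)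

theorem powerGraph_isClaw_of_orderOf_eq_exponent [Finite G] {g h : G}
    (hg : orderOf g = Monoid.exponent G) (hh : h ∉ zpowers g) :
    (powerGraph G).IsClaw 1 g h (g * h) := by
  have hgh_g : g * h ∉ zpowers g := fun hc => hh <| by
    simpa using mul_mem (inv_mem (mem_zpowers g)) hc
  have hg_h : g ∉ zpowers h := notMem_zpowers_of_orderOf_eq_exponent hg hh
  have hgh_h : g * h ∉ zpowers h := fun hc => hg_h <| by
    simpa using mul_mem hc (inv_mem (mem_zpowers h))
  have hg_gh : g ∉ zpowers (g * h) := notMem_zpowers_of_orderOf_eq_exponent hg hgh_g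
  have hh_gh : h ∉ zpowers (g * h) := fun hc => hg_gh <| by
    simpa using mul_mem (mem_zpowers (g * h)) (inv_mem hc)
  exact powerGraph_isClaw_one_of_notMem_zpowers hg_h hh hg_gh hgh_g hh_gh hgh_h

end PowerGraph

theorem powerGraph_not_isLineGraph_of_noncyclic_abelian (G : Type) [CommGroup G] [Finite G]
    (hnc : ¬ IsCyclic G) :
    ¬ IsLineGraph (powerGraph G) := by
  intro hline
  obtain ⟨g, hg⟩ := Monoid.exists_orderOf_eq_exponent (G := G) Monoid.ExponentExists.of_finite
  obtain ⟨h, hh⟩ : ∃ h, h ∉ zpowers g := by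
    by_contra! hall
    exact hnc ⟨g, hall⟩
  exact hline.not_isClaw _ _ _ _ (powerGraph_isClaw_of_orderOf_eq_exponent hg hh)
end

section
/- Let G be a finite non-abelian nilpotent group such that |G| has exactly two distinct prime divisors. Then the proper power graph P**(G) is not a line graph: there is no graph Γ such that P**(G) is isomorphic to the line graph of Γ. -/
/-! A non-abelian finite nilpotent group is the direct product of its Sylow subgroups, so one of
them, `P`, contains non-commuting elements `x, y`. Let `c ≠ 1` lie in the Sylow subgroup for the
other prime. Then `c` centralises `P` and has order coprime to `|P|`, so `c` is a power of `g c` for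
every `1 ≠ g ∈ P`, while `g c` and `h c` (with `g, h ∈ P`) are comparable only if `g` and `h`
commute. Hence `c; x c, y c, x y c` is an induced claw `K₁,₃` in `P**(G)`, and line graphs are
claw-free. -/

namespace SimpleGraph

variable {V W : Type}

def IsClawFree (H : SimpleGraph V) : Prop :=
  ∀ ⦃v x y z : V⦄, H.Adj v x → H.Adj v y → H.Adj v z → x ≠ y → x ≠ z → y ≠ z →
    H.Adj x y ∨ H.Adj x z ∨ H.Adj y z

-- Each neighbour of the edge `s(a, b)` contains `a` or `b`, so two of any three neighbours
-- share one of them.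
theorem isClawFree_lineGraph (Γ : SimpleGraph W) : Γ.lineGraph.IsClawFree := by
  intro e e₁ e₂ e₃ h₁ h₂ h₃ h₁₂ h₁₃ h₂₃
  obtain ⟨a, b, hab⟩ : ∃ a b, (e : Sym2 W) = s(a, b) :=
    (e : Sym2 W).inductionOn fun a b => ⟨a, b, rfl⟩
  have mem_of_adj {e' : Γ.edgeSet} (h : Γ.lineGraph.Adj e e') :
      a ∈ (e' : Sym2 W) ∨ b ∈ (e' : Sym2 W) := by
    obtain ⟨-, u, hu, hu'⟩ := lineGraph_adj_iff_exists.1 h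
    rw [hab, Sym2.mem_iff] at hu
    rcases hu with rfl | rfl
    exacts [.inl hu', .inr hu']
  simp only [lineGraph_adj_iff_exists]
  rcases mem_of_adj h₁ with h₁ | h₁ <;> rcases mem_of_adj h₂ with h₂ | h₂ <;>
    rcases mem_of_adj h₃ with h₃ | h₃ <;>
    first
      | exact .inl ⟨h₁₂, _, h₁, h₂⟩
      | exact .inr (.inl ⟨h₁₃, _, h₁, h₃⟩)
      | exact .inr (.inr ⟨h₂₃, _, h₂, h₃⟩)

theorem IsClawFree.of_embedding {H : SimpleGraph V} {H' : SimpleGraph W} (hH' : H'.IsClawFree)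
    (f : H ↪g H') : H.IsClawFree := by
  intro v x y z hx hy hz hxy hxz hyz
  simpa only [f.map_adj_iff] using
    hH' (f.map_adj_iff.2 hx) (f.map_adj_iff.2 hy) (f.map_adj_iff.2 hz)
      (f.injective.ne hxy) (f.injective.ne hxz) (f.injective.ne hyz)

end SimpleGraph

theorem IsLineGraph.isClawFree {V : Type} {H : SimpleGraph V} (hH : IsLineGraph H) :
    H.IsClawFree := by
  obtain ⟨W, Γ, ⟨φ⟩⟩ := hH
  exact Γ.isClawFree_lineGraph.of_embedding φ.toEmbedding

theorem commute_of_powerGraph_adj {G : Type} [Group G] {a b : G} (h : (powerGraph G).Adj a b) :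
    Commute a b := by
  obtain ⟨-, ⟨n, -, rfl⟩ | ⟨n, -, rfl⟩⟩ := h
  · exact (Commute.refl b).pow_left n
  · exact (Commute.refl a).pow_right n

theorem commute_mul_mul_iff {G : Type} [Group G] {g h c : G} (hg : Commute g c)
    (hh : Commute h c) : Commute (g * c) (h * c) ↔ Commute g h := by
  have hgh : g * c * (h * c) = g * h * (c * c) := by
    rw [mul_assoc, ← mul_assoc c, ← hh.eq]; group
  have hhg : h * c * (g * c) = h * g * (c * c) := by
    rw [mul_assoc, ← mul_assoc c, ← hg.eq]; group
  simp only [commute_iff_eq, hgh, hhg, mul_left_inj]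

section

variable {G : Type} [Group G] {P : Subgroup G} {c : G} {M N : ℕ}

theorem powerGraph_adj_mul_of_mem (hMN : M.Coprime N) (hP : ∀ g ∈ P, g ^ M = 1)
    (hPc : ∀ g ∈ P, Commute g c) (hc : c ^ N = 1) (hc1 : c ≠ 1) {g : G} (hg : g ∈ P)
    (hg1 : g ≠ 1) : (powerGraph G).Adj c (g * c) := by
  obtain ⟨k, hkM, hkN⟩ := Nat.chineseRemainder hMN 0 1
  have hgk : g ^ k = 1 := by
    obtain ⟨t, ht⟩ := Nat.modEq_zero_iff_dvd.1 hkM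
    rw [ht, pow_mul, hP g hg, one_pow]
  have hck : c ^ k = c := by
    simpa using pow_eq_pow_iff_modEq.2 (hkN.of_dvd (orderOf_dvd_of_pow_eq_one hc))
  refine ⟨fun h => hg1 (by simpa using h), .inl ⟨k, Nat.pos_of_ne_zero ?_, ?_⟩⟩
  · rintro rfl
    exact hc1 (by simpa using hck.symm)
  · rw [(hPc g hg).mul_pow, hgk, hck, one_mul]

theorem powerGraph_not_adj_of_mem (hMN : M.Coprime N) (hP : ∀ g ∈ P, g ^ M = 1)
    (hc : c ^ N = 1) (hc1 : c ≠ 1) {g : G} (hg : g ∈ P) (hg1 : g ≠ 1) :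
    ¬ (powerGraph G).Adj c g := by
  have eq_one {a : G} (hM : a ^ M = 1) (hN : a ^ N = 1) : a = 1 := by
    simpa [hMN.gcd_eq_one] using pow_gcd_eq_one.2 ⟨hM, hN⟩
  rintro ⟨-, ⟨n, -, rfl⟩ | ⟨n, -, rfl⟩⟩
  · exact hc1 (eq_one (hP _ (pow_mem hg n)) hc)
  · exact hg1 (eq_one (hP _ hg) (by rw [← pow_mul, mul_comm, pow_mul, hc, one_pow]))

theorem not_isClawFree_properPowerGraph (hMN : M.Coprime N) (hP : ∀ g ∈ P, g ^ M = 1)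
    (hPc : ∀ g ∈ P, Commute g c) (hc : c ^ N = 1) (hc1 : c ≠ 1) {x y : G} (hx : x ∈ P)
    (hy : y ∈ P) (hxy : ¬ Commute x y) : ¬ (properPowerGraph G).IsClawFree := by
  have ne_one {g h : G} (hgh : ¬ Commute g h) : g ≠ 1 := by
    rintro rfl
    exact hgh (Commute.one_left h)
  have leaf_ne {g h : G} (hgh : ¬ Commute g h) : g * c ≠ h * c := by
    rintro he
    exact hgh (by rw [mul_right_cancel he])
  have leaf_not_adj {g h : G} (hg : g ∈ P) (hh : h ∈ P) (hgh : ¬ Commute g h) :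
      ¬ (powerGraph G).Adj (g * c) (h * c) := fun hadj =>
    hgh ((commute_mul_mul_iff (hPc g hg) (hPc h hh)).1 (commute_of_powerGraph_adj hadj))
  have leaf_not_dom {g h : G} (hg : g ∈ P) (hh : h ∈ P) (hgh : ¬ Commute g h) :
      ¬ (powerGraph G).IsDominatingVertex (g * c) := fun hdom =>
    leaf_not_adj hg hh hgh (hdom _ (leaf_ne hgh).symm)
  have center_not_dom : ¬ (powerGraph G).IsDominatingVertex c := by
    refine fun hdom => powerGraph_not_adj_of_mem hMN hP hc hc1 hx (ne_one hxy) (hdom x ?_)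
    rintro rfl
    exact hxy (hPc y hy).symm
  have hyx : ¬ Commute y x := fun h => hxy h.symm
  have hx_xy : ¬ Commute x (x * y) := fun h =>
    hxy (by simpa using (Commute.refl x).inv_right.mul_right h)
  have hy_xy : ¬ Commute y (x * y) := fun h =>
    hyx (by simpa using h.mul_right (Commute.refl y).inv_right)
  have hxy_x : ¬ Commute (x * y) x := fun h => hx_xy h.symm
  have hxyP : x * y ∈ P := mul_mem hx hy
  intro hclaw
  rcases hclaw (v := ⟨c, center_not_dom⟩) (x := ⟨x * c, leaf_not_dom hx hy hxy⟩)
    (y := ⟨y * c, leaf_not_dom hy hx hyx⟩) (z := ⟨x * y * c, leaf_not_dom hxyP hx hxy_x⟩)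
    (powerGraph_adj_mul_of_mem hMN hP hPc hc hc1 hx (ne_one hxy))
    (powerGraph_adj_mul_of_mem hMN hP hPc hc hc1 hy (ne_one hyx))
    (powerGraph_adj_mul_of_mem hMN hP hPc hc hc1 hxyP (ne_one hxy_x))
    (fun h => leaf_ne hxy (congrArg Subtype.val h))
    (fun h => leaf_ne hx_xy (congrArg Subtype.val h))
    (fun h => leaf_ne hy_xy (congrArg Subtype.val h)) with h | h | h
  · exact leaf_not_adj hx hy hxy h
  · exact leaf_not_adj hx hxyP hx_xy h
  · exact leaf_not_adj hy hxyP hy_xy h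

end

section

variable {G : Type} [Group G] [Finite G] [Group.IsNilpotent G]

theorem exists_sylow_not_commute (h : ∃ a b : G, ¬ Commute a b) :
    ∃ p ∈ (Nat.card G).primeFactors, ∃ P : Sylow p G, ∃ x ∈ P, ∃ y ∈ P, ¬ Commute x y := by
  by_contra! hP
  obtain ⟨a, b, hab⟩ := h
  obtain ⟨e⟩ := (Group.isNilpotent_of_finite_tfae.out 0 4).1 ‹Group.IsNilpotent G›
  have he : Commute (e.symm a) (e.symm b) := by
    funext p P
    exact Subtype.ext (hP p p.2 P _ (e.symm a p P).2 _ (e.symm b p P).2)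
  exact hab (by simpa using he.map e)

theorem commute_of_mem_sylow_of_ne {p q : ℕ} [Fact p.Prime] [Fact q.Prime] (hpq : p ≠ q)
    (P : Sylow p G) (Q : Sylow q G) {g h : G} (hg : g ∈ P) (hh : h ∈ Q) : Commute g h :=
  Subgroup.commute_of_normal_of_disjoint _ _ inferInstance inferInstance
    (IsPGroup.disjoint_of_ne p q hpq _ _ P.isPGroup' Q.isPGroup') g h hg hh

end

theorem properPowerGraph_not_isLineGraph_of_two_primes (G : Type) [Group G] [Finite G]
    (hnil : Group.IsNilpotent G) (hna : ∃ a b : G, a * b ≠ b * a)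
    (hp : (Nat.card G).primeFactors.card = 2) :
    ¬ IsLineGraph (properPowerGraph G) := by
  obtain ⟨p, hp_mem, P, x, hx, y, hy, hxy⟩ := exists_sylow_not_commute hna
  obtain ⟨q, hq_mem, hqp⟩ := Finset.exists_mem_ne (hp ▸ one_lt_two) p
  have := Fact.mk (Nat.prime_of_mem_primeFactors hp_mem)
  have := Fact.mk (Nat.prime_of_mem_primeFactors hq_mem)
  let Q : Sylow q G := default
  obtain ⟨⟨c, hcQ⟩, hc1⟩ := Subgroup.ne_bot_iff_exists_ne_one.1
    (Q.ne_bot_of_dvd_card (Nat.dvd_of_mem_primeFactors hq_mem))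
  have pow_card_eq_one {H : Subgroup G} {g : G} (hg : g ∈ H) : g ^ Nat.card H = 1 := by
    simpa only [SubmonoidClass.coe_pow, OneMemClass.coe_one] using
      congrArg Subtype.val (pow_card_eq_one' (x := (⟨g, hg⟩ : H)))
  refine fun hL => not_isClawFree_properPowerGraph
    (IsPGroup.coprime_card_of_ne p q hqp.symm _ _ P.isPGroup' Q.isPGroup')
    (fun g hg => pow_card_eq_one hg)
    (fun g hg => commute_of_mem_sylow_of_ne hqp.symm P Q hg hcQ)
    (pow_card_eq_one hcQ) (by simpa using hc1) hx hy hxy hL.isClawFree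
end

section
/- Let p be a prime and let G be a finite p-group. Then the number of distinct subgroups of G of order p is never equal to 2; that is, G has either exactly one subgroup of order p or at least three subgroups of order p. -/
/-!
A nontrivial `p`-group has a central subgroup `⟨z⟩` of order `p`. If `⟨k⟩` is any other subgroup
of order `p`, then `z` and `k` commute, so `zk` has order `p`, and `⟨zk⟩` is a third subgroup of
order `p`: it contains neither `k` nor `z`.
-/

open Subgroup

section

variable {G : Type*} [Group G] {p : ℕ} [Fact p.Prime]

theorem Subgroup.zpowers_eq_of_mem_of_orderOf_eq {H : Subgroup G} [Finite H] {x : G}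
    (hx : x ∈ H) (h : orderOf x = Nat.card H) : zpowers x = H :=
  eq_of_le_of_card_ge (zpowers_le.mpr hx) (by rw [Nat.card_zpowers, h])

theorem Commute.orderOf_mul_eq_prime {x y : G} (hxy : Commute x y)
    (hx : x ^ p = 1) (hy : y ^ p = 1) (hyx : y ∉ zpowers x) :
    orderOf (x * y) = p :=
  orderOf_eq_prime (by rw [hxy.mul_pow, hx, hy, one_mul]) fun h ↦
    hyx (eq_inv_of_mul_eq_one_right h ▸ inv_mem (mem_zpowers x))

theorem IsPGroup.exists_mem_center_orderOf_eq [Finite G] [Nontrivial G] (hG : IsPGroup p G) :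
    ∃ z ∈ center G, orderOf z = p := by
  have := hG.center_nontrivial
  obtain ⟨n, hn, hcard⟩ := (hG.to_subgroup (center G)).nontrivial_iff_card.mp this
  obtain ⟨z, hz⟩ := exists_prime_orderOf_dvd_card' (G := center G) p
    (hcard ▸ dvd_pow_self p hn.ne')
  exact ⟨z, z.2, (orderOf_coe z).trans hz⟩

theorem Subgroup.exists_mem_orderOf_eq_prime {H : Subgroup G} (hH : Nat.card H = p) :
    ∃ x ∈ H, orderOf x = p := by
  have : Finite H := Nat.finite_of_card_ne_zero (hH ▸ NeZero.ne p)
  obtain ⟨x, hx⟩ := exists_prime_orderOf_dvd_card' (G := H) p hH.symm.dvd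
  exact ⟨x, x.2, (orderOf_coe x).trans hx⟩

theorem Subgroup.exists_card_eq_prime_ne_zpowers_ne {z : G} (hzc : z ∈ center G)
    (hz : orderOf z = p) {D : Subgroup G} (hD : Nat.card D = p) (hDz : D ≠ zpowers z) :
    ∃ L : Subgroup G, Nat.card L = p ∧ L ≠ zpowers z ∧ L ≠ D := by
  have : Finite D := Nat.finite_of_card_ne_zero (hD ▸ NeZero.ne p)
  have hzcard : Nat.card (zpowers z) = p := by rw [Nat.card_zpowers, hz]
  have : Finite (zpowers z) := Nat.finite_of_card_ne_zero (hzcard ▸ NeZero.ne p)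
  obtain ⟨k, hkD, hk⟩ := exists_mem_orderOf_eq_prime hD
  have hkz : k ∉ zpowers z := fun hkz ↦ hDz <| by
    rw [← zpowers_eq_of_mem_of_orderOf_eq hkD (hk.trans hD.symm),
      zpowers_eq_of_mem_of_orderOf_eq hkz (hk.trans hzcard.symm)]
  have hzk : orderOf (z * k) = p :=
    Commute.orderOf_mul_eq_prime (mem_center_iff.mp hzc k).symm (hz ▸ pow_orderOf_eq_one z)
      (hk ▸ pow_orderOf_eq_one k) hkz
  refine ⟨zpowers (z * k), by rw [Nat.card_zpowers, hzk], fun h ↦ hkz ?_, fun h ↦ hDz ?_⟩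
  · exact (mul_mem_cancel_left (mem_zpowers z)).mp (h ▸ mem_zpowers (z * k))
  · have hzD : z ∈ D := (mul_mem_cancel_right hkD).mp (h ▸ mem_zpowers (z * k))
    exact (zpowers_eq_of_mem_of_orderOf_eq hzD (hz.trans hD.symm)).symm

end

theorem card_subgroups_of_order_p_ne_two (p : ℕ) (hp : p.Prime) (G : Type) [Group G]
    [Finite G] (hpg : IsPGroup p G) :
    Nat.card {H : Subgroup G // Nat.card H = p} ≠ 2 := by
  intro h2
  have : Fact p.Prime := ⟨hp⟩
  obtain ⟨⟨H, hH⟩⟩ := (Nat.card_pos_iff.mp (h2 ▸ two_pos)).1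
  obtain ⟨x, -, hx⟩ := H.exists_mem_orderOf_eq_prime hH
  have : Nontrivial G := ⟨⟨x, 1, fun h ↦ hp.ne_one (hx ▸ h ▸ orderOf_one)⟩⟩
  obtain ⟨z, hzc, hz⟩ := hpg.exists_mem_center_orderOf_eq
  have hzcard : Nat.card (zpowers z) = p := by rw [Nat.card_zpowers, hz]
  obtain ⟨⟨D, hD⟩, hDz, hunique⟩ := (Nat.card_eq_two_iff' ⟨zpowers z, hzcard⟩).mp h2
  obtain ⟨L, hL, hLz, hLD⟩ :=
    exists_card_eq_prime_ne_zpowers_ne hzc hz hD (fun h ↦ hDz (Subtype.ext h))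
  exact hLD (congrArg Subtype.val (hunique ⟨L, hL⟩ fun h ↦ hLz (congrArg Subtype.val h)))
end
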